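/- arXiv:1611.06867 — 8 statements merged into one kernel-verified Lean document; each statement's English description precedes it below -/
import Mathlib

section
/- For any generalized quaternion M = m₁ + m₂e₂ + m₃e₃ + m₄e₄ in H(α,β), the characteristic polynomial of the 4×4 real matrix L(M) of left multiplication by M equals ((X − m₁)² + w(M))², where w(M) = α m₂² + β m₃² + αβ m₄². In particular, its roots are the two values m₁ ± √(−w(M)), each with multiplicity 2. -/
open Quaternion Matrix Polynomial

/-- The standard basis `(1, e₂, e₃, e₄)` of `H(α,β) = ℍ[ℝ, -α, -β]`. -/
noncomputable def gqBasis (α β : ℝ) : Fin 4 → ℍ[ℝ, -α, -β] :=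
  ![1, ⟨0, 1, 0, 0⟩, ⟨0, 0, 1, 0⟩, ⟨0, 0, 0, 1⟩]

/-- The coordinates of a generalized quaternion with respect to `(1, e₂, e₃, e₄)`. -/
def gqCoord {α β : ℝ} (q : ℍ[ℝ, -α, -β]) : Fin 4 → ℝ :=
  ![q.re, q.imI, q.imJ, q.imK]

/-- `L M`: the matrix of left multiplication by `M` in the basis `(1, e₂, e₃, e₄)`. -/
noncomputable def L (α β : ℝ) (M : ℍ[ℝ, -α, -β]) : Matrix (Fin 4) (Fin 4) ℝ :=
  Matrix.of fun i j => gqCoord (M * gqBasis α β j) i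

set_option maxHeartbeats 1000000 in
lemma charpoly_L_aux (α β m₁ m₂ m₃ m₄ : ℝ) :
    Matrix.charpoly (L α β ⟨m₁, m₂, m₃, m₄⟩) =
      ((X - C m₁) ^ 2 + C (α * m₂ ^ 2 + β * m₃ ^ 2 + α * β * m₄ ^ 2)) ^ 2 := by
  have hL : L α β ⟨m₁, m₂, m₃, m₄⟩ =
      !![m₁, -(α*m₂), -(β*m₃), -(α*β*m₄);
         m₂, m₁, -(β*m₄), β*m₃;
         m₃, α*m₄, m₁, -(α*m₂);
         m₄, -m₃, m₂, m₁] := by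
    ext i j
    fin_cases i <;> fin_cases j <;> simp [L, gqBasis, gqCoord] <;> ring
  have hc : charmatrix (L α β ⟨m₁, m₂, m₃, m₄⟩) =
      !![X - C m₁, C (α*m₂), C (β*m₃), C (α*β*m₄);
         -C m₂, X - C m₁, C (β*m₄), -C (β*m₃);
         -C m₃, -C (α*m₄), X - C m₁, C (α*m₂);
         -C m₄, C m₃, -C m₂, X - C m₁] := by
    rw [hL]
    ext i j
    fin_cases i <;> fin_cases j <;> simp [charmatrix_apply, Matrix.one_apply]
  rw [Matrix.charpoly, hc]
  simp [Matrix.det_succ_row_zero, Fin.sum_univ_succ, Fin.succAbove, Fin.succ,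
    Fin.castSucc, Fin.castAdd, Fin.castLE]
  ring_nf

lemma aroots_aux (m₁ w : ℝ) (z : ℂ) (hz : z ^ 2 = -w) :
    (((X - C m₁) ^ 2 + C w) ^ 2).aroots ℂ =
      {(m₁ : ℂ) + z, (m₁ : ℂ) + z, (m₁ : ℂ) - z, (m₁ : ℂ) - z} := by
  have hw : ((algebraMap ℝ ℂ) w : ℂ) = -z ^ 2 := by
    rw [Complex.coe_algebraMap]; linear_combination hz
  have hmap : (((X - C m₁) ^ 2 + C w) ^ 2).map (algebraMap ℝ ℂ) =
      (X - C ((m₁ : ℂ) + z)) ^ 2 * (X - C ((m₁ : ℂ) - z)) ^ 2 := by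
    simp only [Polynomial.map_pow, Polynomial.map_add, Polynomial.map_sub, Polynomial.map_X,
      Polynomial.map_C, hw, Complex.coe_algebraMap, C_add, C_sub, map_neg, map_pow]
    ring
  rw [aroots, hmap, roots_mul (by
      apply mul_ne_zero <;> exact pow_ne_zero _ (X_sub_C_ne_zero _)),
    roots_pow, roots_pow, roots_X_sub_C, roots_X_sub_C]
  rfl

/-- The characteristic polynomial of `L(M)` is `((X - m₁)² + w(M))²`, where
`w(M) = α m₂² + β m₃² + αβ m₄²`; its (complex) roots are `m₁ ± √(-w(M))`, each with
multiplicity 2. -/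
theorem charpoly_L (α β m₁ m₂ m₃ m₄ : ℝ) :
    Matrix.charpoly (L α β ⟨m₁, m₂, m₃, m₄⟩) =
      ((X - C m₁) ^ 2 + C (α * m₂ ^ 2 + β * m₃ ^ 2 + α * β * m₄ ^ 2)) ^ 2 ∧
    ∀ z : ℂ, z ^ 2 = -(α * m₂ ^ 2 + β * m₃ ^ 2 + α * β * m₄ ^ 2) →
      (Matrix.charpoly (L α β ⟨m₁, m₂, m₃, m₄⟩)).aroots ℂ =
        {(m₁ : ℂ) + z, (m₁ : ℂ) + z, (m₁ : ℂ) - z, (m₁ : ℂ) - z} := by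
  refine ⟨charpoly_L_aux α β m₁ m₂ m₃ m₄, fun z hz => ?_⟩
  rw [charpoly_L_aux α β m₁ m₂ m₃ m₄]
  exact aroots_aux m₁ _ z (by push_cast at hz ⊢; exact hz)
end

section
/- Let M = m₁ + m₂e₂ + m₃e₃ + m₄e₄ ∈ H(α,β) and suppose w(M) = α m₂² + β m₃² + αβ m₄² > 0. Then for every real t, the matrix exponential of t·L(M) equals L(E(t)), where E(t) = e^{m₁ t}·( cos(√(w(M))·t)·1 + (sin(√(w(M))·t)/√(w(M)))·(m₂e₂ + m₃e₃ + m₄e₄) ). In particular (t = 1), Exp(M) = e^{m₁}( cos√(w(M)) + (sin√(w(M))/√(w(M)))·(m₂e₂ + m₃e₃ + m₄e₄) ). -/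
open Quaternion Matrix Real

open NormedSpace in
open scoped Nat in
lemma exp_of_sq {𝔸 : Type*} [NormedRing 𝔸] [NormedAlgebra ℝ 𝔸] [CompleteSpace 𝔸]
    (A : 𝔸) (r : ℝ) (hr : r ≠ 0) (h : A * A = -(r ^ 2) • 1) :
    exp A = Real.cos r • 1 + (Real.sin r / r) • A := by
  rw [exp_eq_tsum ℝ]
  refine HasSum.tsum_eq ?_
  have hA2 : A ^ 2 = (-(r ^ 2)) • 1 := by rw [sq, h]
  have hpow : ∀ n : ℕ, A ^ (2 * n) = ((-1 : ℝ) ^ n * r ^ (2 * n)) • (1 : 𝔸) := by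
    intro n
    rw [pow_mul, hA2, smul_pow, one_pow, neg_pow, ← pow_mul]
  have heven : ∀ n : ℕ, ((((2 * n)! : ℕ)) : ℝ)⁻¹ • A ^ (2 * n) =
      ((-1 : ℝ) ^ n * r ^ (2 * n) / (2 * n)!) • (1 : 𝔸) := by
    intro n
    rw [hpow, smul_smul, div_eq_inv_mul]
  have hodd : ∀ n : ℕ, ((((2 * n + 1)! : ℕ)) : ℝ)⁻¹ • A ^ (2 * n + 1) =
      ((-1 : ℝ) ^ n * r ^ (2 * n + 1) / (2 * n + 1)! / r) • A := by
    intro n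
    rw [pow_succ, hpow, smul_mul_assoc, one_mul, smul_smul]
    congr 1
    rw [pow_succ, mul_comm (r ^ (2*n)) r, ← mul_assoc]
    field_simp
  have hc : HasSum (fun n : ℕ => ((((2 * n)! : ℕ)) : ℝ)⁻¹ • A ^ (2 * n)) (Real.cos r • 1) := by
    simp_rw [heven]
    exact (Real.hasSum_cos r).smul_const 1
  have hs : HasSum (fun n : ℕ => ((((2 * n + 1)! : ℕ)) : ℝ)⁻¹ • A ^ (2 * n + 1))
      ((Real.sin r / r) • A) := by
    simp_rw [hodd]
    exact (((Real.hasSum_sin r).div_const r).smul_const A)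
  exact HasSum.even_add_odd hc hs

lemma L_explicit (α β a b c d : ℝ) : L α β ⟨a,b,c,d⟩ =
    !![a, -(α*b), -(β*c), -(α*β*d);
       b, a, -(β*d), β*c;
       c, α*d, a, -(α*b);
       d, -c, b, a] := by
  ext i j
  fin_cases i <;> fin_cases j <;>
    simp [L, gqBasis, gqCoord, QuaternionAlgebra.re_mul, QuaternionAlgebra.imI_mul,
      QuaternionAlgebra.imJ_mul, QuaternionAlgebra.imK_mul]

/-- If `w(M) = α m₂² + β m₃² + αβ m₄² > 0` then for every real `t`,
`exp (t • L(M)) = L(E(t))` with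
`E(t) = e^{m₁ t} (cos(√w · t) • 1 + (sin(√w · t)/√w) • (m₂e₂ + m₃e₃ + m₄e₄))`;
in particular (`t = 1`),
`Exp(M) = e^{m₁} (cos √w • 1 + (sin √w/√w) • (m₂e₂ + m₃e₃ + m₄e₄))`. -/
theorem exp_L_of_w_pos (α β m₁ m₂ m₃ m₄ : ℝ)
    (hw : 0 < α * m₂ ^ 2 + β * m₃ ^ 2 + α * β * m₄ ^ 2) :
    (∀ t : ℝ,
      NormedSpace.exp (t • L α β ⟨m₁, m₂, m₃, m₄⟩) =
        L α β (Real.exp (m₁ * t) •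
          (Real.cos (Real.sqrt (α * m₂ ^ 2 + β * m₃ ^ 2 + α * β * m₄ ^ 2) * t) • 1 +
            (Real.sin (Real.sqrt (α * m₂ ^ 2 + β * m₃ ^ 2 + α * β * m₄ ^ 2) * t) /
              Real.sqrt (α * m₂ ^ 2 + β * m₃ ^ 2 + α * β * m₄ ^ 2)) •
              (⟨0, m₂, m₃, m₄⟩ : ℍ[ℝ, -α, -β])))) ∧
    NormedSpace.exp (L α β ⟨m₁, m₂, m₃, m₄⟩) =
      L α β (Real.exp m₁ •
        (Real.cos (Real.sqrt (α * m₂ ^ 2 + β * m₃ ^ 2 + α * β * m₄ ^ 2)) • 1 +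
          (Real.sin (Real.sqrt (α * m₂ ^ 2 + β * m₃ ^ 2 + α * β * m₄ ^ 2)) /
            Real.sqrt (α * m₂ ^ 2 + β * m₃ ^ 2 + α * β * m₄ ^ 2)) •
            (⟨0, m₂, m₃, m₄⟩ : ℍ[ℝ, -α, -β]))) := by
  set w : ℝ := α * m₂ ^ 2 + β * m₃ ^ 2 + α * β * m₄ ^ 2 with hw_def
  set s : ℝ := Real.sqrt w with hs_def
  have hs_pos : 0 < s := Real.sqrt_pos.mpr hw
  have hs_sq : s ^ 2 = w := Real.sq_sqrt hw.le
  set A₀ : Matrix (Fin 4) (Fin 4) ℝ := L α β ⟨0, m₂, m₃, m₄⟩ with hA₀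
  -- decomposition of L M
  have hdecomp : L α β ⟨m₁, m₂, m₃, m₄⟩ = m₁ • (1 : Matrix (Fin 4) (Fin 4) ℝ) + A₀ := by
    rw [hA₀, L_explicit, L_explicit]
    ext i j
    fin_cases i <;> fin_cases j <;> simp [Matrix.one_apply]
  -- square of A₀
  have hA₀sq : A₀ * A₀ = -(w) • (1 : Matrix (Fin 4) (Fin 4) ℝ) := by
    rw [hA₀, L_explicit]
    ext i j
    fin_cases i <;> fin_cases j <;>
      simp [Matrix.mul_apply, Fin.sum_univ_four, Matrix.one_apply, hw_def] <;> ring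
  -- the RHS quaternion and its image under L
  have hLrhs : ∀ e k : ℝ,
      L α β (e • ((Real.cos k) • 1 + (Real.sin k / s) • (⟨0, m₂, m₃, m₄⟩ : ℍ[ℝ, -α, -β]))) =
        (e * Real.cos k) • (1 : Matrix (Fin 4) (Fin 4) ℝ) + (e * (Real.sin k / s)) • A₀ := by
    intro e k
    have hq : e • ((Real.cos k) • 1 + (Real.sin k / s) • (⟨0, m₂, m₃, m₄⟩ : ℍ[ℝ, -α, -β])) =
        (⟨e * Real.cos k, e * (Real.sin k / s) * m₂, e * (Real.sin k / s) * m₃,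
          e * (Real.sin k / s) * m₄⟩ : ℍ[ℝ, -α, -β]) := by
      ext <;> simp <;> ring
    rw [hq, L_explicit, hA₀, L_explicit]
    ext i j
    fin_cases i <;> fin_cases j <;> simp [Matrix.one_apply] <;> ring
  have main : ∀ t : ℝ,
      NormedSpace.exp (t • L α β ⟨m₁, m₂, m₃, m₄⟩) =
        L α β (Real.exp (m₁ * t) •
          ((Real.cos (s * t)) • 1 + (Real.sin (s * t) / s) •
            (⟨0, m₂, m₃, m₄⟩ : ℍ[ℝ, -α, -β]))) := by
    intro t
    letI : SeminormedRing (Matrix (Fin 4) (Fin 4) ℝ) := Matrix.linftyOpSemiNormedRing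
    letI : NormedRing (Matrix (Fin 4) (Fin 4) ℝ) := Matrix.linftyOpNormedRing
    letI : NormedAlgebra ℝ (Matrix (Fin 4) (Fin 4) ℝ) := Matrix.linftyOpNormedAlgebra
    rcases eq_or_ne t 0 with rfl | ht
    · rw [zero_smul, NormedSpace.exp_zero, hLrhs]
      simp
    · have h1 : t • L α β ⟨m₁, m₂, m₃, m₄⟩ =
          (algebraMap ℝ (Matrix (Fin 4) (Fin 4) ℝ)) (m₁ * t) + t • A₀ := by
        rw [hdecomp, smul_add, smul_smul, Algebra.algebraMap_eq_smul_one, mul_comm t m₁]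
      have hcomm : Commute ((algebraMap ℝ (Matrix (Fin 4) (Fin 4) ℝ)) (m₁ * t)) (t • A₀) :=
        (Algebra.commutes _ _)
      rw [h1, Matrix.exp_add_of_commute _ _ hcomm]
      have hexp1 : NormedSpace.exp ((algebraMap ℝ (Matrix (Fin 4) (Fin 4) ℝ)) (m₁ * t)) =
          (algebraMap ℝ (Matrix (Fin 4) (Fin 4) ℝ)) (Real.exp (m₁ * t)) := by
        erw [← NormedSpace.map_exp (algebraMap ℝ (Matrix (Fin 4) (Fin 4) ℝ))
          (continuous_algebraMap _ _), Real.exp_eq_exp_ℝ]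
      have hsq : (t • A₀) * (t • A₀) = -((s * t) ^ 2) • (1 : Matrix (Fin 4) (Fin 4) ℝ) := by
        rw [smul_mul_smul_comm, hA₀sq, smul_smul, mul_pow, hs_sq]
        congr 1
        ring
      have hexp2 := exp_of_sq (t • A₀) (s * t) (mul_ne_zero hs_pos.ne' ht) hsq
      erw [hexp1, hexp2, hLrhs]
      rw [Algebra.algebraMap_eq_smul_one, smul_mul_assoc, one_mul, smul_add, smul_smul,
        smul_smul, smul_smul]
      congr 2
      field_simp
  refine ⟨main, ?_⟩
  have h1 := main 1
  rw [one_smul, mul_one, mul_one] at h1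
  exact h1
end

section
/- Let M = m₁ + m₂e₂ + m₃e₃ + m₄e₄ ∈ H(α,β) and suppose w(M) = α m₂² + β m₃² + αβ m₄² < 0. Then the matrix exponential of L(M) equals L(E), where E = e^{m₁}·( cosh(√(−w(M)))·1 + (sinh(√(−w(M)))/√(−w(M)))·(m₂e₂ + m₃e₃ + m₄e₄) ). -/
open Quaternion Matrix Real

open NormedSpace in
/-- In a real Banach algebra, if `x ^ 2 = s ^ 2 • 1` with `s ≠ 0`, then
`exp x = cosh s • 1 + (sinh s / s) • x`. -/
lemma exp_of_sq_s6 {𝔸 : Type*} [NormedRing 𝔸] [NormedAlgebra ℝ 𝔸] [CompleteSpace 𝔸]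
    (x : 𝔸) (s : ℝ) (hs : s ≠ 0) (hx : x ^ 2 = s ^ 2 • (1 : 𝔸)) :
    exp x = Real.cosh s • (1 : 𝔸) + (Real.sinh s / s) • x := by
  rw [exp_eq_tsum (𝕂 := ℝ)]
  refine HasSum.tsum_eq ?_
  have hc := (Real.hasSum_cosh s).smul_const (1 : 𝔸)
  have hsin := ((Real.hasSum_sinh s).div_const s).smul_const x
  refine HasSum.even_add_odd ?_ ?_
  · convert hc using 2 with k
    rw [pow_mul, hx, smul_pow, one_pow, smul_smul, ← pow_mul, div_eq_inv_mul]
  · convert hsin using 2 with k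
    rw [pow_succ, pow_mul, hx, smul_pow, one_pow, smul_mul_assoc, one_mul, smul_smul,
      ← pow_mul]
    congr 1
    field_simp
    ring

set_option maxHeartbeats 1000000 in
lemma L_sq (α β m₂ m₃ m₄ : ℝ) :
    (L α β ⟨0, m₂, m₃, m₄⟩) ^ 2 =
      (-(α * m₂ ^ 2 + β * m₃ ^ 2 + α * β * m₄ ^ 2)) • (1 : Matrix (Fin 4) (Fin 4) ℝ) := by
  ext i j
  fin_cases i <;> fin_cases j <;>
    simp [L, gqCoord, gqBasis, pow_two, Matrix.mul_apply, Fin.sum_univ_four, Matrix.one_apply,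
      QuaternionAlgebra.re_mul, QuaternionAlgebra.imI_mul, QuaternionAlgebra.imJ_mul,
      QuaternionAlgebra.imK_mul] <;> ring

set_option maxHeartbeats 1000000 in
lemma L_decomp (α β m₁ m₂ m₃ m₄ : ℝ) :
    L α β ⟨m₁, m₂, m₃, m₄⟩ =
      m₁ • (1 : Matrix (Fin 4) (Fin 4) ℝ) + L α β ⟨0, m₂, m₃, m₄⟩ := by
  ext i j
  rw [Matrix.add_apply, Matrix.smul_apply, Matrix.one_apply]
  fin_cases i <;> fin_cases j <;>
    simp [L, gqCoord, gqBasis, QuaternionAlgebra.re_mul,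
      QuaternionAlgebra.imI_mul, QuaternionAlgebra.imJ_mul, QuaternionAlgebra.imK_mul]

set_option maxHeartbeats 1000000 in
lemma L_rhs (α β m₂ m₃ m₄ a c d : ℝ) :
    L α β (a • ((c : ℝ) • 1 + d • (⟨0, m₂, m₃, m₄⟩ : ℍ[ℝ, -α, -β]))) =
      a • (c • (1 : Matrix (Fin 4) (Fin 4) ℝ) + d • L α β ⟨0, m₂, m₃, m₄⟩) := by
  ext i j
  simp only [Matrix.smul_apply, Matrix.add_apply, Matrix.one_apply]
  fin_cases i <;> fin_cases j <;>
    simp [L, gqCoord, gqBasis, QuaternionAlgebra.re_mul,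
      QuaternionAlgebra.imI_mul, QuaternionAlgebra.imJ_mul, QuaternionAlgebra.imK_mul] <;>
    ring

/-- If `w(M) = α m₂² + β m₃² + αβ m₄² < 0` then
`exp (L(M)) = L(e^{m₁} (cosh √(-w) • 1 + (sinh √(-w)/√(-w)) • (m₂e₂ + m₃e₃ + m₄e₄)))`. -/
theorem exp_L_of_w_neg (α β m₁ m₂ m₃ m₄ : ℝ)
    (hw : α * m₂ ^ 2 + β * m₃ ^ 2 + α * β * m₄ ^ 2 < 0) :
    NormedSpace.exp (L α β ⟨m₁, m₂, m₃, m₄⟩) =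
      L α β (Real.exp m₁ •
        (Real.cosh (Real.sqrt (-(α * m₂ ^ 2 + β * m₃ ^ 2 + α * β * m₄ ^ 2))) • 1 +
          (Real.sinh (Real.sqrt (-(α * m₂ ^ 2 + β * m₃ ^ 2 + α * β * m₄ ^ 2))) /
            Real.sqrt (-(α * m₂ ^ 2 + β * m₃ ^ 2 + α * β * m₄ ^ 2))) •
            (⟨0, m₂, m₃, m₄⟩ : ℍ[ℝ, -α, -β]))) := by
  letI : SeminormedRing (Matrix (Fin 4) (Fin 4) ℝ) := Matrix.linftyOpSemiNormedRing
  letI : NormedRing (Matrix (Fin 4) (Fin 4) ℝ) := Matrix.linftyOpNormedRing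
  letI : NormedAlgebra ℝ (Matrix (Fin 4) (Fin 4) ℝ) := Matrix.linftyOpNormedAlgebra
  let +nondep : NormedAlgebra ℚ (Matrix (Fin 4) (Fin 4) ℝ) := .restrictScalars ℚ ℝ _
  have hw' : (0 : ℝ) < -(α * m₂ ^ 2 + β * m₃ ^ 2 + α * β * m₄ ^ 2) := by linarith
  set s : ℝ := Real.sqrt (-(α * m₂ ^ 2 + β * m₃ ^ 2 + α * β * m₄ ^ 2)) with hsdef
  have hs : s ≠ 0 := ne_of_gt (Real.sqrt_pos.mpr hw')
  have hs2 : s ^ 2 = -(α * m₂ ^ 2 + β * m₃ ^ 2 + α * β * m₄ ^ 2) := Real.sq_sqrt hw'.le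
  have hN2 : (L α β ⟨0, m₂, m₃, m₄⟩) ^ 2 = s ^ 2 • (1 : Matrix (Fin 4) (Fin 4) ℝ) := by
    rw [hs2]; exact L_sq α β m₂ m₃ m₄
  rw [L_decomp, L_rhs]
  have hcomm : Commute (m₁ • (1 : Matrix (Fin 4) (Fin 4) ℝ)) (L α β ⟨0, m₂, m₃, m₄⟩) :=
    (Commute.one_left _).smul_left m₁
  erw [NormedSpace.exp_add_of_commute hcomm, exp_of_sq_s6 _ s hs hN2]
  have h1 : NormedSpace.exp (m₁ • (1 : Matrix (Fin 4) (Fin 4) ℝ)) =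
      Real.exp m₁ • (1 : Matrix (Fin 4) (Fin 4) ℝ) := by
    erw [← Algebra.algebraMap_eq_smul_one, ← NormedSpace.algebraMap_exp_comm,
      ← Real.exp_eq_exp_ℝ, Algebra.algebraMap_eq_smul_one]
  erw [h1, smul_mul_assoc, one_mul]
end

section
/- Let M = m₁ + m₂e₂ + m₃e₃ + m₄e₄ ∈ H(α,β) and suppose w(M) = α m₂² + β m₃² + αβ m₄² = 0. Then the matrix exponential of L(M) equals L(E), where E = e^{m₁}·( 1 + m₂e₂ + m₃e₃ + m₄e₄ ). -/
open Quaternion Matrix Real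

lemma gqL_eq (α β : ℝ) (q : ℍ[ℝ, -α, -β]) :
    L α β q = !![q.re, -α*q.imI, -β*q.imJ, -(α*β*q.imK);
                 q.imI, q.re, -β*q.imK, β*q.imJ;
                 q.imJ, α*q.imK, q.re, -α*q.imI;
                 q.imK, -q.imJ, q.imI, q.re] := by
  ext i j
  fin_cases i <;> fin_cases j <;>
    simp [L, gqCoord, gqBasis, QuaternionAlgebra.re_mul, QuaternionAlgebra.imI_mul,
      QuaternionAlgebra.imJ_mul, QuaternionAlgebra.imK_mul] <;> ring

lemma gqL_mul (α β : ℝ) (q r : ℍ[ℝ, -α, -β]) : L α β (q * r) = L α β q * L α β r := by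
  rw [gqL_eq, gqL_eq, gqL_eq]
  ext i j
  fin_cases i <;> fin_cases j <;>
    simp [Matrix.mul_apply, Fin.sum_univ_four, QuaternionAlgebra.re_mul,
      QuaternionAlgebra.imI_mul, QuaternionAlgebra.imJ_mul, QuaternionAlgebra.imK_mul] <;>
    ring

lemma gqL_one (α β : ℝ) : L α β 1 = 1 := by
  rw [gqL_eq]
  ext i j
  fin_cases i <;> fin_cases j <;> simp [Matrix.one_apply, vecHead, vecTail]

lemma gqL_add (α β : ℝ) (q r : ℍ[ℝ, -α, -β]) : L α β (q + r) = L α β q + L α β r := by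
  rw [gqL_eq, gqL_eq, gqL_eq]
  ext i j
  fin_cases i <;> fin_cases j <;> simp <;> ring

lemma gqL_smul (α β s : ℝ) (q : ℍ[ℝ, -α, -β]) : L α β (s • q) = s • L α β q := by
  rw [gqL_eq, gqL_eq]
  ext i j
  fin_cases i <;> fin_cases j <;> simp <;> ring

lemma gq_exp_of_sq_zero {A : Type*} [NormedRing A] [NormedAlgebra ℝ A] [CompleteSpace A]
    (x : A) (h : x * x = 0) : NormedSpace.exp x = 1 + x := by
  rw [NormedSpace.exp_eq_tsum ℝ]
  beta_reduce
  have hpow : ∀ n : ℕ, 2 ≤ n → x ^ n = 0 := by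
    intro n hn
    calc x ^ n = x ^ 2 * x ^ (n - 2) := by rw [← pow_add]; congr 1; omega
    _ = 0 := by rw [sq, h, zero_mul]
  rw [tsum_eq_sum (s := {0, 1}) (by
    intro n hn
    simp only [Finset.mem_insert, Finset.mem_singleton] at hn
    push_neg at hn
    rw [hpow n (by omega), smul_zero])]
  norm_num

/-- If `w(M) = α m₂² + β m₃² + αβ m₄² = 0` then
`exp (L(M)) = L(e^{m₁} (1 + m₂e₂ + m₃e₃ + m₄e₄))`. -/
theorem exp_L_of_w_zero (α β m₁ m₂ m₃ m₄ : ℝ)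
    (hw : α * m₂ ^ 2 + β * m₃ ^ 2 + α * β * m₄ ^ 2 = 0) :
    NormedSpace.exp (L α β ⟨m₁, m₂, m₃, m₄⟩) =
      L α β (Real.exp m₁ • (⟨1, m₂, m₃, m₄⟩ : ℍ[ℝ, -α, -β])) := by
  letI : NormedRing (Matrix (Fin 4) (Fin 4) ℝ) := Matrix.linftyOpNormedRing
  letI : NormedAlgebra ℝ (Matrix (Fin 4) (Fin 4) ℝ) := Matrix.linftyOpNormedAlgebra
  letI : NormedAlgebra ℚ (Matrix (Fin 4) (Fin 4) ℝ) := Matrix.linftyOpNormedAlgebra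
  set P : ℍ[ℝ, -α, -β] := ⟨0, m₂, m₃, m₄⟩ with hP
  have hM : (⟨m₁, m₂, m₃, m₄⟩ : ℍ[ℝ, -α, -β]) = m₁ • 1 + P := by
    ext <;> simp [hP]
  have hP2 : P * P = 0 := by
    ext <;> simp [hP, QuaternionAlgebra.re_mul, QuaternionAlgebra.imI_mul,
      QuaternionAlgebra.imJ_mul, QuaternionAlgebra.imK_mul] <;> nlinarith [hw]
  have hLP2 : L α β P * L α β P = 0 := by
    rw [← gqL_mul, hP2, gqL_eq]
    ext i j
    fin_cases i <;> fin_cases j <;> simp [vecHead, vecTail]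
  have hcomm : Commute ((m₁ : ℝ) • (1 : Matrix (Fin 4) (Fin 4) ℝ)) (L α β P) :=
    (Commute.one_left (L α β P)).smul_left m₁
  rw [hM, gqL_add, gqL_smul, gqL_one]
  erw [NormedSpace.exp_add_of_commute hcomm]
  rw [gq_exp_of_sq_zero _ hLP2]
  have hexp1 : NormedSpace.exp ((m₁ : ℝ) • (1 : Matrix (Fin 4) (Fin 4) ℝ)) =
      Real.exp m₁ • 1 := by
    have := NormedSpace.algebraMap_exp_comm (𝔸 := Matrix (Fin 4) (Fin 4) ℝ) m₁
    rw [Algebra.algebraMap_eq_smul_one, Algebra.algebraMap_eq_smul_one] at this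
    erw [← this]
    rw [Real.exp_eq_exp_ℝ]
  have hq : Real.exp m₁ • ((1 : ℍ[ℝ, -α, -β]) + P) =
      Real.exp m₁ • (⟨1, m₂, m₃, m₄⟩ : ℍ[ℝ, -α, -β]) := by
    ext <;> simp [hP]
  erw [hexp1]
  rw [smul_one_mul, ← gqL_one α β, ← gqL_add, ← gqL_smul, hq]
end

section
/- Let M = m₁ + m₂e₂ + m₃e₃ + m₄e₄ ∈ H(α,β), and let E = x₁ + x₂e₂ + x₃e₃ + x₄e₄ be the unique element of H(α,β) with Matrix.exp(L(M)) = L(E). Then the norm form of E satisfies x₁² + α x₂² + β x₃² + αβ x₄² = e^{2 m₁}. -/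
open Quaternion Matrix Real

/-- The matrix `L q`, explicitly. -/
lemma L_eq (α β : ℝ) (q : ℍ[ℝ, -α, -β]) : L α β q =
    !![q.re, -α*q.imI, -β*q.imJ, -α*β*q.imK;
       q.imI, q.re, -β*q.imK, β*q.imJ;
       q.imJ, α*q.imK, q.re, -α*q.imI;
       q.imK, -q.imJ, q.imI, q.re] := by
  ext i j
  fin_cases i <;> fin_cases j <;>
    simp [L, gqCoord, gqBasis, QuaternionAlgebra.re_mul, QuaternionAlgebra.imI_mul,
      QuaternionAlgebra.imJ_mul, QuaternionAlgebra.imK_mul]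

/-- The "twisting" matrix `S = diag(αβ, β, α, 1)` intertwining `(L q)ᵀ` and `L (star q)`. -/
def gqS (α β : ℝ) : Matrix (Fin 4) (Fin 4) ℝ :=
  !![α*β, 0, 0, 0; 0, β, 0, 0; 0, 0, α, 0; 0, 0, 0, 1]

lemma gqS_transpose (α β : ℝ) (q : ℍ[ℝ, -α, -β]) :
    gqS α β * (L α β q)ᵀ = L α β (star q) * gqS α β := by
  ext i j
  fin_cases i <;> fin_cases j <;>
    · simp [gqS, L_eq, Matrix.mul_apply, Fin.sum_univ_four, Matrix.transpose_apply,
        Matrix.vecHead, Matrix.vecTail, -mul_eq_mul_left_iff, -mul_eq_mul_right_iff]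
      try ring

lemma L_mul_L_star (α β : ℝ) (q : ℍ[ℝ, -α, -β]) :
    L α β q * L α β (star q) =
      (q.re ^ 2 + α * q.imI ^ 2 + β * q.imJ ^ 2 + α * β * q.imK ^ 2) • 1 := by
  ext i j
  fin_cases i <;> fin_cases j <;>
    · simp [L_eq, Matrix.mul_apply, Fin.sum_univ_four, Matrix.one_apply, Matrix.smul_apply,
        -mul_eq_mul_left_iff, -mul_eq_mul_right_iff]
      ring

/-- If `E = x₁ + x₂e₂ + x₃e₃ + x₄e₄` satisfies `exp (L(M)) = L(E)`, then the norm form of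
`E` satisfies `x₁² + α x₂² + β x₃² + αβ x₄² = e^{2 m₁}`. -/
theorem norm_form_exp (α β m₁ m₂ m₃ m₄ : ℝ) (E : ℍ[ℝ, -α, -β])
    (hE : NormedSpace.exp (L α β ⟨m₁, m₂, m₃, m₄⟩) = L α β E) :
    E.re ^ 2 + α * E.imI ^ 2 + β * E.imJ ^ 2 + α * β * E.imK ^ 2 = Real.exp (2 * m₁) := by
  set M : ℍ[ℝ, -α, -β] := ⟨m₁, m₂, m₃, m₄⟩ with hM
  set A := L α β M with hA
  set B := L α β (star M) with hB
  set S := gqS α β with hS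
  have hBA : B = (2*m₁) • 1 - A := by
    rw [hB, hA, L_eq, L_eq]
    ext i j
    fin_cases i <;> fin_cases j <;>
      · simp [hM, Matrix.smul_apply, Matrix.one_apply]
        try ring
  have hcomm : Commute A B := by
    rw [hBA]
    exact ((Commute.one_right A).smul_right _).sub_right (Commute.refl A)
  have hSA : S * Aᵀ = B * S := gqS_transpose α β M
  have hpow : ∀ n : ℕ, S * (Aᵀ)^n = B^n * S := by
    intro n
    induction n with
    | zero => simp
    | succ n ih =>
      rw [pow_succ, pow_succ, ← mul_assoc, ih, mul_assoc, hSA, ← mul_assoc]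
  letI : SeminormedRing (Matrix (Fin 4) (Fin 4) ℝ) := Matrix.linftyOpSemiNormedRing
  letI : NormedRing (Matrix (Fin 4) (Fin 4) ℝ) := Matrix.linftyOpNormedRing
  letI : NormedAlgebra ℝ (Matrix (Fin 4) (Fin 4) ℝ) := Matrix.linftyOpNormedAlgebra
  have hsum : Summable (fun n : ℕ => ((n.factorial : ℝ)⁻¹) • (Aᵀ)^n) :=
    NormedSpace.expSeries_summable' (𝕂 := ℝ) Aᵀ
  have hSexp : S * NormedSpace.exp Aᵀ = NormedSpace.exp B * S := by
    simp only [NormedSpace.exp_eq_tsum ℝ]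
    rw [← Summable.tsum_mul_left S hsum]
    have := Summable.tsum_mul_right S (NormedSpace.expSeries_summable' (𝕂 := ℝ) B)
    erw [← this]
    refine tsum_congr fun n => ?_
    rw [Matrix.mul_smul, Matrix.smul_mul, hpow]
  have hAB : NormedSpace.exp A * NormedSpace.exp B = Real.exp (2*m₁) • 1 := by
    rw [← Matrix.exp_add_of_commute A B hcomm]
    have h1 : A + B = algebraMap ℝ (Matrix (Fin 4) (Fin 4) ℝ) (2*m₁) := by
      rw [hBA, Algebra.algebraMap_eq_smul_one]; abel
    have h2 := NormedSpace.algebraMap_exp_comm (𝔸 := Matrix (Fin 4) (Fin 4) ℝ) (2*m₁)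
    rw [h1]
    erw [← h2]
    rw [← Real.exp_eq_exp_ℝ,
      Algebra.algebraMap_eq_smul_one]
  have hLE : L α β E = NormedSpace.exp A := hE.symm
  have hstar : L α β (star E) * S = NormedSpace.exp B * S := by
    rw [← gqS_transpose, hLE, ← Matrix.exp_transpose, hSexp]
  have key : (E.re ^ 2 + α * E.imI ^ 2 + β * E.imJ ^ 2 + α * β * E.imK ^ 2) • S
      = Real.exp (2*m₁) • S := by
    calc (E.re ^ 2 + α * E.imI ^ 2 + β * E.imJ ^ 2 + α * β * E.imK ^ 2) • S
        = (L α β E * L α β (star E)) * S := by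
          rw [L_mul_L_star, Matrix.smul_mul, one_mul]
      _ = L α β E * (L α β (star E) * S) := by rw [mul_assoc]
      _ = NormedSpace.exp A * (NormedSpace.exp B * S) := by rw [hstar, hLE]
      _ = Real.exp (2*m₁) • S := by rw [← mul_assoc, hAB, Matrix.smul_mul, one_mul]
  have h33 := congrArg (fun X : Matrix (Fin 4) (Fin 4) ℝ => X 3 3) key
  simpa [hS, gqS, Matrix.smul_apply] using h33
end

section
/- Let X = x₁ + x₂e₂ + x₃e₃ + x₄e₄ ∈ H(α,β) with w(X) = α x₂² + β x₃² + αβ x₄² < 0, x₁ > 0, and x̄ := x₁² + w(X) > 0. Define Λ = (1/2)·ln(x̄) + ( artanh(√(−w(X))/x₁) / √(−w(X)) )·(x₂e₂ + x₃e₃ + x₄e₄), where artanh is the real inverse hyperbolic tangent. Then Matrix.exp(L(Λ)) = L(X), i.e. Λ is a logarithm of X. -/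
open Quaternion Matrix Real

/-- The real inverse hyperbolic tangent. -/
noncomputable def artanh (x : ℝ) : ℝ := (1 / 2) * Real.log ((1 + x) / (1 - x))

theorem Lmat (α β a b c d : ℝ) : L α β ⟨a,b,c,d⟩ =
    !![a, -α*b, -β*c, -(α*β)*d;
       b,  a,   -β*d,  β*c;
       c,  α*d,  a,   -α*b;
       d, -c,    b,    a] := by
  ext i j
  fin_cases i <;> fin_cases j <;>
    simp [L, gqCoord, gqBasis, QuaternionAlgebra.re_mul, QuaternionAlgebra.imI_mul,
      QuaternionAlgebra.imJ_mul, QuaternionAlgebra.imK_mul]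

theorem decompL (α β s c x₂ x₃ x₄ : ℝ) :
    L α β ⟨s, c*x₂, c*x₃, c*x₄⟩ =
      s • (1 : Matrix (Fin 4) (Fin 4) ℝ) + c • L α β ⟨0, x₂, x₃, x₄⟩ := by
  rw [Lmat, Lmat]
  ext i j
  fin_cases i <;> fin_cases j <;> simp [Matrix.one_apply] <;> ring

theorem M0sq (α β x₂ x₃ x₄ : ℝ) :
    L α β ⟨0, x₂, x₃, x₄⟩ * L α β ⟨0, x₂, x₃, x₄⟩ =
      (-(α * x₂ ^ 2 + β * x₃ ^ 2 + α * β * x₄ ^ 2)) • (1 : Matrix (Fin 4) (Fin 4) ℝ) := by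
  rw [Lmat]
  ext i j
  fin_cases i <;> fin_cases j <;>
    simp [Matrix.mul_apply, Fin.sum_univ_four, Matrix.one_apply] <;> ring


noncomputable def phiN (N : Matrix (Fin 4) (Fin 4) ℝ) (hN : N * N = 1) :
    (ℝ × ℝ) →ₐ[ℝ] Matrix (Fin 4) (Fin 4) ℝ where
  toFun p := ((p.1 + p.2) / 2) • 1 + ((p.1 - p.2) / 2) • N
  map_one' := by norm_num
  map_mul' p q := by
    show _ = (((p.1 + p.2) / 2) • 1 + ((p.1 - p.2) / 2) • N) *
        (((q.1 + q.2) / 2) • 1 + ((q.1 - q.2) / 2) • N)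
    simp only [Prod.fst_mul, Prod.snd_mul, mul_add, add_mul, smul_mul_assoc, mul_smul_comm,
      hN, mul_one, one_mul, smul_smul]
    module
  map_zero' := by norm_num
  map_add' p q := by
    show _ = _ + _
    simp only [Prod.fst_add, Prod.snd_add]
    module
  commutes' r := by
    have h : (algebraMap ℝ (ℝ × ℝ)) r = (r, r) := rfl
    show ((((algebraMap ℝ (ℝ × ℝ)) r).1 + ((algebraMap ℝ (ℝ × ℝ)) r).2) / 2) •
        (1 : Matrix (Fin 4) (Fin 4) ℝ) + ((((algebraMap ℝ (ℝ × ℝ)) r).1 -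
        ((algebraMap ℝ (ℝ × ℝ)) r).2) / 2) • N = algebraMap ℝ (Matrix (Fin 4) (Fin 4) ℝ) r
    rw [h, Algebra.algebraMap_eq_smul_one]
    module

theorem exp_pair (a b : ℝ) :
    NormedSpace.exp ((a, b) : ℝ × ℝ) = (Real.exp a, Real.exp b) := by
  ext
  · rw [Prod.fst_exp, Real.exp_eq_exp_ℝ]
  · rw [Prod.snd_exp, Real.exp_eq_exp_ℝ]

theorem exp_key (a b : ℝ) (N : Matrix (Fin 4) (Fin 4) ℝ) (hN : N * N = 1) :
    NormedSpace.exp (a • (1 : Matrix (Fin 4) (Fin 4) ℝ) + b • N) =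
      ((Real.exp (a + b) + Real.exp (a - b)) / 2) • 1 +
        ((Real.exp (a + b) - Real.exp (a - b)) / 2) • N := by
  letI : SeminormedRing (Matrix (Fin 4) (Fin 4) ℝ) := Matrix.linftyOpSemiNormedRing
  letI : NormedRing (Matrix (Fin 4) (Fin 4) ℝ) := Matrix.linftyOpNormedRing
  letI : NormedAlgebra ℝ (Matrix (Fin 4) (Fin 4) ℝ) := Matrix.linftyOpNormedAlgebra
  have hcont : Continuous (phiN N hN) := by
    show Continuous fun p : ℝ × ℝ => ((p.1 + p.2) / 2) • (1 : Matrix (Fin 4) (Fin 4) ℝ) +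
      ((p.1 - p.2) / 2) • N
    fun_prop
  have h1 : phiN N hN (a + b, a - b) = a • (1 : Matrix (Fin 4) (Fin 4) ℝ) + b • N := by
    show ((((a+b) + (a-b)) / 2) • (1 : Matrix (Fin 4) (Fin 4) ℝ) + (((a+b) - (a-b)) / 2) • N) = _
    have e1 : ((a+b) + (a-b)) / 2 = a := by ring
    have e2 : ((a+b) - (a-b)) / 2 = b := by ring
    rw [e1, e2]
  rw [← h1]
  refine (NormedSpace.map_exp (phiN N hN) hcont (a + b, a - b)).symm.trans ?_
  rw [exp_pair]
  rfl

/-- If `w(X) = α x₂² + β x₃² + αβ x₄² < 0`, `x₁ > 0` and `x̄ = x₁² + w(X) > 0`, then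
`Λ = (1/2) ln x̄ + (artanh(√(-w)/x₁)/√(-w)) • (x₂e₂ + x₃e₃ + x₄e₄)` is a logarithm of
`X = x₁ + x₂e₂ + x₃e₃ + x₄e₄`: `exp (L(Λ)) = L(X)`. -/
theorem log_of_w_neg (α β x₁ x₂ x₃ x₄ : ℝ)
    (hw : α * x₂ ^ 2 + β * x₃ ^ 2 + α * β * x₄ ^ 2 < 0) (hx₁ : 0 < x₁)
    (hxbar : 0 < x₁ ^ 2 + (α * x₂ ^ 2 + β * x₃ ^ 2 + α * β * x₄ ^ 2)) :
    NormedSpace.exp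
      (L α β
        (((1 / 2) * Real.log (x₁ ^ 2 + (α * x₂ ^ 2 + β * x₃ ^ 2 + α * β * x₄ ^ 2))) • 1 +
          (_root_.artanh (Real.sqrt (-(α * x₂ ^ 2 + β * x₃ ^ 2 + α * β * x₄ ^ 2)) / x₁) /
            Real.sqrt (-(α * x₂ ^ 2 + β * x₃ ^ 2 + α * β * x₄ ^ 2))) •
            (⟨0, x₂, x₃, x₄⟩ : ℍ[ℝ, -α, -β]))) =
      L α β ⟨x₁, x₂, x₃, x₄⟩ := by
  set w : ℝ := α * x₂ ^ 2 + β * x₃ ^ 2 + α * β * x₄ ^ 2 with hw_def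
  set r : ℝ := Real.sqrt (-w) with hr_def
  set s : ℝ := (1 / 2) * Real.log (x₁ ^ 2 + w) with hs_def
  set θ : ℝ := _root_.artanh (r / x₁) with hθ_def
  set t : ℝ := θ / r with ht_def
  have hnw : 0 < -w := by linarith
  have hr0 : 0 < r := Real.sqrt_pos.2 hnw
  have hr2 : r ^ 2 = -w := Real.sq_sqrt hnw.le
  have hrx : r < x₁ := by
    have h2 : r ^ 2 < x₁ ^ 2 := by rw [hr2]; linarith
    exact lt_of_pow_lt_pow_left₀ 2 hx₁.le h2
  have hp : 0 < x₁ + r := by linarith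
  have hm : 0 < x₁ - r := by linarith
  -- scalar identities
  have hθ2 : θ = (1 / 2) * (Real.log (x₁ + r) - Real.log (x₁ - r)) := by
    have hd : (0:ℝ) < 1 - r / x₁ := by rw [sub_pos, div_lt_one hx₁]; exact hrx
    have harg : (1 + r / x₁) / (1 - r / x₁) = (x₁ + r) / (x₁ - r) := by
      rw [div_eq_div_iff hd.ne' hm.ne']
      field_simp
    rw [hθ_def, _root_.artanh, harg, Real.log_div hp.ne' hm.ne']
  have hs2 : s = (1 / 2) * (Real.log (x₁ + r) + Real.log (x₁ - r)) := by
    have hx : x₁ ^ 2 + w = (x₁ + r) * (x₁ - r) := by linear_combination hr2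
    rw [hs_def, hx, Real.log_mul hp.ne' hm.ne']
  have e1 : Real.exp (s + θ) = x₁ + r := by
    have h : s + θ = Real.log (x₁ + r) := by rw [hs2, hθ2]; ring
    rw [h, Real.exp_log hp]
  have e2 : Real.exp (s - θ) = x₁ - r := by
    have h : s - θ = Real.log (x₁ - r) := by rw [hs2, hθ2]; ring
    rw [h, Real.exp_log hm]
  -- the quaternion Λ
  have hΛ : (s • 1 + t • (⟨0, x₂, x₃, x₄⟩ : ℍ[ℝ, -α, -β])) =
      (⟨s, t * x₂, t * x₃, t * x₄⟩ : ℍ[ℝ, -α, -β]) := by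
    ext <;> simp
  set M : Matrix (Fin 4) (Fin 4) ℝ := L α β ⟨0, x₂, x₃, x₄⟩ with hM_def
  set N : Matrix (Fin 4) (Fin 4) ℝ := r⁻¹ • M with hN_def
  have hN : N * N = 1 := by
    rw [hN_def, smul_mul_smul_comm, hM_def, M0sq, ← hw_def, smul_smul, ← hr2]
    have h : r⁻¹ * r⁻¹ * r ^ 2 = 1 := by rw [pow_two]; field_simp
    rw [h, one_smul]
  have htM : t • M = θ • N := by
    rw [hN_def, smul_smul, ht_def, div_eq_mul_inv]
  have hA : L α β (s • 1 + t • (⟨0, x₂, x₃, x₄⟩ : ℍ[ℝ, -α, -β])) =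
      s • (1 : Matrix (Fin 4) (Fin 4) ℝ) + θ • N := by
    rw [hΛ, decompL, ← hM_def, htM]
  rw [hA, exp_key s θ N hN, e1, e2]
  have c1 : ((x₁ + r) + (x₁ - r)) / 2 = x₁ := by ring
  have c2 : ((x₁ + r) - (x₁ - r)) / 2 = r := by ring
  rw [c1, c2]
  have hrN : r • N = M := by
    rw [hN_def, smul_smul, mul_inv_cancel₀ hr0.ne', one_smul]
  rw [hrN, hM_def]
  have hfin := decompL α β x₁ 1 x₂ x₃ x₄
  simp only [one_mul, one_smul] at hfin
  rw [← hfin]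
end

section
/- The exponential of generalized quaternions is multivalued in its inverse: let M = m₁ + m₂e₂ + m₃e₃ + m₄e₄ ∈ H(α,β) with w(M) = α m₂² + β m₃² + αβ m₄² > 0. Then for every integer n, Matrix.exp( L( M + (2πn/√(w(M)))·(m₂e₂ + m₃e₃ + m₄e₄) ) ) = Matrix.exp( L(M) ). -/
open Quaternion Matrix Real

theorem L_eq' (α β a b c d : ℝ) : L α β ⟨a,b,c,d⟩ =
    !![a, -α*b, -β*c, -α*β*d;
       b, a, -β*d, β*c;
       c, α*d, a, -α*b;
       d, -c, b, a] := by
  ext i j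
  fin_cases i <;> fin_cases j <;>
    simp [L, gqBasis, gqCoord, QuaternionAlgebra.re_mul, QuaternionAlgebra.imI_mul,
      QuaternionAlgebra.imJ_mul, QuaternionAlgebra.imK_mul]

theorem J_sq (α β b c d : ℝ) :
    L α β (⟨0,b,c,d⟩ : ℍ[ℝ,-α,-β]) * L α β (⟨0,b,c,d⟩ : ℍ[ℝ,-α,-β]) =
      (-(α*b^2 + β*c^2 + α*β*d^2)) • (1 : Matrix (Fin 4) (Fin 4) ℝ) := by
  rw [L_eq']
  ext i j
  fin_cases i <;> fin_cases j <;>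
    simp [Matrix.mul_apply, Fin.sum_univ_four, Matrix.one_apply] <;> ring

/-- Multivaluedness of the inverse of the exponential: if `w(M) > 0` then for every
integer `n`, `exp (L(M + (2πn/√w) • (m₂e₂ + m₃e₃ + m₄e₄))) = exp (L(M))`. -/
theorem exp_L_periodic (α β m₁ m₂ m₃ m₄ : ℝ)
    (hw : 0 < α * m₂ ^ 2 + β * m₃ ^ 2 + α * β * m₄ ^ 2) :
    ∀ n : ℤ,
      NormedSpace.exp
        (L α β ((⟨m₁, m₂, m₃, m₄⟩ : ℍ[ℝ, -α, -β]) +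
          ((2 * Real.pi * n) / Real.sqrt (α * m₂ ^ 2 + β * m₃ ^ 2 + α * β * m₄ ^ 2)) •
            (⟨0, m₂, m₃, m₄⟩ : ℍ[ℝ, -α, -β]))) =
      NormedSpace.exp (L α β ⟨m₁, m₂, m₃, m₄⟩) := by
  intro n
  letI : SeminormedRing (Matrix (Fin 4) (Fin 4) ℝ) := Matrix.linftyOpSemiNormedRing
  letI : NormedRing (Matrix (Fin 4) (Fin 4) ℝ) := Matrix.linftyOpNormedRing
  letI : NormedAlgebra ℝ (Matrix (Fin 4) (Fin 4) ℝ) := Matrix.linftyOpNormedAlgebra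
  set w : ℝ := α * m₂ ^ 2 + β * m₃ ^ 2 + α * β * m₄ ^ 2 with hwdef
  have hs : Real.sqrt w > 0 := Real.sqrt_pos.mpr hw
  have hs' : Real.sqrt w ≠ 0 := ne_of_gt hs
  have hssq : Real.sqrt w * Real.sqrt w = w := Real.mul_self_sqrt hw.le
  set J : Matrix (Fin 4) (Fin 4) ℝ :=
    (Real.sqrt w)⁻¹ • L α β (⟨0,m₂,m₃,m₄⟩ : ℍ[ℝ,-α,-β]) with hJ
  have hJsq : J * J = -1 := by
    rw [hJ, smul_mul_smul_comm, J_sq, smul_smul]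
    rw [show (Real.sqrt w)⁻¹ * (Real.sqrt w)⁻¹ * -w = -1 by
      rw [← mul_inv, hssq, mul_neg, inv_mul_cancel₀ hw.ne']]
    simp
  set φ : ℂ →ₐ[ℝ] Matrix (Fin 4) (Fin 4) ℝ := Complex.liftAux J hJsq with hφ
  have hφc : Continuous φ := φ.toLinearMap.continuous_of_finiteDimensional
  have hφ_apply : ∀ x y : ℝ, φ ⟨x, y⟩ = x • (1 : Matrix (Fin 4) (Fin 4) ℝ) + y • J := by
    intro x y
    rw [hφ, Complex.liftAux_apply]
    simp [Algebra.algebraMap_eq_smul_one]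
  have key : ∀ x y : ℝ, L α β (⟨x, y*m₂, y*m₃, y*m₄⟩ : ℍ[ℝ,-α,-β]) = φ ⟨x, y * Real.sqrt w⟩ := by
    intro x y
    rw [hφ_apply, hJ, smul_smul, L_eq', L_eq']
    have : y * Real.sqrt w * (Real.sqrt w)⁻¹ = y := by field_simp
    rw [this]
    ext i j
    fin_cases i <;> fin_cases j <;>
      simp [Matrix.one_apply] <;> ring
  have hM : (⟨m₁, m₂, m₃, m₄⟩ : ℍ[ℝ, -α, -β]) = ⟨m₁, 1*m₂, 1*m₃, 1*m₄⟩ := by norm_num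
  have hM' : (⟨m₁, m₂, m₃, m₄⟩ : ℍ[ℝ, -α, -β]) +
      ((2 * Real.pi * n) / Real.sqrt w) • (⟨0, m₂, m₃, m₄⟩ : ℍ[ℝ, -α, -β]) =
      ⟨m₁, (1 + 2 * Real.pi * n / Real.sqrt w)*m₂, (1 + 2 * Real.pi * n / Real.sqrt w)*m₃,
        (1 + 2 * Real.pi * n / Real.sqrt w)*m₄⟩ := by
    ext <;> simp <;> ring
  rw [hM', key, hM, key]
  erw [← NormedSpace.map_exp φ hφc, ← NormedSpace.map_exp φ hφc]
  congr 1
  have hre : (NormedSpace.exp : ℂ → ℂ) = Complex.exp := by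
    rw [← Complex.exp_eq_exp_ℂ]
  rw [hre]
  have hz : (⟨m₁, (1 + 2 * Real.pi * n / Real.sqrt w) * Real.sqrt w⟩ : ℂ) =
      ⟨m₁, 1 * Real.sqrt w⟩ + n * (2 * Real.pi * Complex.I) := by
    apply Complex.ext <;> simp <;> field_simp <;> ring
  rw [hz, Complex.exp_add]
  rw [show ((n : ℂ) * (2 * Real.pi * Complex.I)) = (n : ℤ) * (2 * Real.pi * Complex.I) by push_cast; ring]
  rw [Complex.exp_int_mul_two_pi_mul_I, mul_one]
end

section
/- Logarithm of a real quaternion: let q ∈ ℍ with real part re(q) > 0 and imaginary part im(q) ≠ 0. Then exp( ln‖q‖ + ( arctan(‖im(q)‖ / re(q)) / ‖im(q)‖ ) • im(q) ) = q, where exp is the exponential function on ℍ, ‖·‖ is the quaternion norm, and arctan is the real arctangent. -/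
open Quaternion

/-- Logarithm of a real quaternion: if `re q > 0` and `im q ≠ 0`, then
`exp (ln ‖q‖ + (arctan (‖im q‖ / re q) / ‖im q‖) • im q) = q`. -/
theorem quaternion_exp_log (q : ℍ[ℝ]) (hre : 0 < q.re) (him : q.im ≠ 0) :
    NormedSpace.exp
      ((Real.log ‖q‖ : ℍ[ℝ]) +
        (Real.arctan (‖q.im‖ / q.re) / ‖q.im‖) • q.im) = q := by
  have hr : 0 < ‖q.im‖ := norm_pos_iff.mpr him
  have hq0 : (0:ℝ) < ‖q‖ := norm_pos_iff.mpr (by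
    intro h; rw [h] at hre; simp at hre)
  set x : ℝ := ‖q.im‖ / q.re with hxdef
  have hx0 : 0 < x := div_pos hr hre
  set t : ℝ := Real.arctan x with htdef
  have ht0 : 0 < t := by
    rw [htdef, ← Real.arctan_zero]; exact Real.arctan_strictMono hx0
  have hnormsq : ‖q‖^2 = q.re^2 + ‖q.im‖^2 := by
    have h1 : normSq q = q.re^2 + normSq q.im := by
      simp [normSq_def']; ring
    have h2 := normSq_eq_norm_mul_self q
    have h3 := normSq_eq_norm_mul_self q.im
    nlinarith [h1, h2, h3]
  have hsq : Real.sqrt (1 + x^2) = ‖q‖ / q.re := by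
    rw [show (1:ℝ) + x^2 = (‖q‖/q.re)^2 by
      rw [hxdef, div_pow, div_pow, hnormsq]; field_simp]
    exact Real.sqrt_sq (by positivity)
  have hcos : Real.cos t = q.re / ‖q‖ := by
    rw [htdef, Real.cos_arctan, hsq, one_div, inv_div]
  have hsin : Real.sin t = ‖q.im‖ / ‖q‖ := by
    rw [htdef, Real.sin_arctan, hsq, hxdef]
    field_simp
  set p : ℍ[ℝ] := (Real.log ‖q‖ : ℍ[ℝ]) + (t / ‖q.im‖) • q.im with hpdef
  have hpre : p.re = Real.log ‖q‖ := by simp [hpdef]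
  have hpim : p.im = (t / ‖q.im‖) • q.im := by simp [hpdef]
  have hpimnorm : ‖p.im‖ = t := by
    rw [hpim, norm_smul, Real.norm_eq_abs, abs_of_pos (by positivity),
      div_mul_cancel₀ _ hr.ne']
  rw [Quaternion.exp_eq, hpre, hpimnorm, hpim, ← Real.exp_eq_exp_ℝ,
    Real.exp_log hq0, hcos, hsin, smul_smul,
    show ‖q.im‖ / ‖q‖ / t * (t / ‖q.im‖) = 1 / ‖q‖ by field_simp,
    smul_add, smul_smul, mul_one_div_cancel hq0.ne', one_smul,
    ← coe_mul_eq_smul, ← coe_mul, mul_div_cancel₀ _ hq0.ne', re_add_im]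
end
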